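/- Let γ > 1, ε > 0, let u₀ ∈ ℝ^d, B₀ ∈ ℝ^d, p₀ ∈ ℝ be constants, and let ρ : ℝ^d × (0,∞) → ℝ be positive, twice continuously differentiable in space and continuously differentiable in time, satisfying ∂_t ρ + ∇·(ρ u₀) = εΔρ. Define m := ρ u₀, E := p₀/(γ−1) + ρ|u₀|²/2 + |B₀|²/2, B := B₀, p := p₀, u := u₀, and 𝒯 := B₀ ⊗ B₀ − (|B₀|²/2)I. Then (ρ, m, E, B) solves the full monolithic-regularized ideal MHD system: ∂_t m + ∇·(m ⊗ u + p I) − ∇·𝒯 = εΔm, ∂_t E + ∇·(u(E+p)) − ∇·(u·𝒯) = εΔE, and ∂_t B + ∇·(u ⊗ B − B ⊗ u) = εΔB hold at every point. In particular, the monolithic parabolic flux is compatible with contact waves. -/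

import Mathlib

open scoped BigOperators

/-- Spatial partial derivative `∂_i f (x)` of a scalar field on `ℝ^d`. -/
noncomputable def spd {d : ℕ} (f : (Fin d → ℝ) → ℝ) (i : Fin d) (x : Fin d → ℝ) : ℝ :=
  fderiv ℝ f x (Pi.single i 1)

/-- Laplacian `Δf(x) = ∑ᵢ ∂ᵢ∂ᵢ f (x)` of a scalar field on `ℝ^d`. -/
noncomputable def slap {d : ℕ} (f : (Fin d → ℝ) → ℝ) (x : Fin d → ℝ) : ℝ :=
  ∑ i, spd (spd f i) i x

/-- The Maxwell stress tensor `𝒯 = B ⊗ B − (|B|²/2) I` built from a vector `B ∈ ℝ^d`. -/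
noncomputable def maxwellT {d : ℕ} (B : Fin d → ℝ) (i j : Fin d) : ℝ :=
  B i * B j - (if i = j then (∑ k, (B k) ^ 2) / 2 else 0)

/-
Every unknown of a contact wave, and every component of its flux, is an affine function of the
density with constant coefficients, the flux slope being the state slope times `u₀ j`. Since the
regularized mass equation `∂ₜρ + ∇·(ρu₀) = εΔρ` is linear with constant coefficients, each MHD
equation is that slope times the mass equation; constants drop out of every derivative.
-/

lemma spd_add_const {d : ℕ} (f : (Fin d → ℝ) → ℝ) (c : ℝ) (i : Fin d) :
    spd (fun y => f y + c) i = spd f i := by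
  funext x
  simp only [spd, fderiv_add_const]

lemma spd_const_mul {d : ℕ} (c : ℝ) (f : (Fin d → ℝ) → ℝ) (i : Fin d) :
    spd (fun y => c * f y) i = fun x => c * spd f i x := by
  funext x
  change fderiv ℝ (c • f) x _ = _
  rw [fderiv_const_smul_field]
  rfl

lemma slap_const_mul_add_const {d : ℕ} (c c' : ℝ) (f : (Fin d → ℝ) → ℝ) :
    slap (fun y => c * f y + c') = fun x => c * slap f x := by
  funext x
  simp only [slap, spd_add_const, spd_const_mul, Finset.mul_sum]

lemma regularized_balance_of_affine_in_density {d : ℕ} {ε : ℝ} {u₀ : Fin d → ℝ}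
    {ρ : (Fin d → ℝ) → ℝ → ℝ} {x : Fin d → ℝ} {t : ℝ} {qₜ : ℝ → ℝ} {qₓ : (Fin d → ℝ) → ℝ}
    {F : Fin d → (Fin d → ℝ) → ℝ}
    (hmass : deriv (fun τ => ρ x τ) t + ∑ j, spd (fun y => ρ y t * u₀ j) j x
      = ε * slap (fun y => ρ y t) x)
    (a b : ℝ) (c : Fin d → ℝ) (hqₜ : ∀ τ, qₜ τ = a * ρ x τ + b)
    (hqₓ : ∀ y, qₓ y = a * ρ y t + b) (hF : ∀ j y, F j y = a * (ρ y t * u₀ j) + c j) :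
    deriv qₜ t + ∑ j, spd (F j) j x = ε * slap qₓ x := by
  rw [funext hqₜ, funext hqₓ, funext fun j => funext (hF j), deriv_add_const,
    deriv_const_mul_field', slap_const_mul_add_const]
  simp only [spd_add_const, spd_const_mul, ← Finset.mul_sum]
  linear_combination a * hmass

theorem stmt_16_general {d : ℕ} (γ ε : ℝ)
    (u₀ B₀ : Fin d → ℝ) (p₀ : ℝ)
    (ρ : (Fin d → ℝ) → ℝ → ℝ)
    (hmass : ∀ (x : Fin d → ℝ) (t : ℝ), 0 < t →
      deriv (fun τ => ρ x τ) t + (∑ j, spd (fun y => ρ y t * u₀ j) j x)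
        = ε * slap (fun y => ρ y t) x) :
    -- momentum equation
    (∀ (x : Fin d → ℝ) (t : ℝ), 0 < t → ∀ i,
      deriv (fun τ => ρ x τ * u₀ i) t
        + (∑ j, spd (fun y => (ρ y t * u₀ i) * u₀ j
            + (if i = j then p₀ else 0) - maxwellT B₀ i j) j x)
        = ε * slap (fun y => ρ y t * u₀ i) x)
    -- energy equation
    ∧ (∀ (x : Fin d → ℝ) (t : ℝ), 0 < t →
      deriv (fun τ => p₀ / (γ - 1) + ρ x τ * (∑ k, (u₀ k) ^ 2) / 2
          + (∑ k, (B₀ k) ^ 2) / 2) t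
        + (∑ j, spd (fun y => u₀ j * ((p₀ / (γ - 1) + ρ y t * (∑ k, (u₀ k) ^ 2) / 2
              + (∑ k, (B₀ k) ^ 2) / 2) + p₀)
            - ∑ k, u₀ k * maxwellT B₀ k j) j x)
        = ε * slap (fun y => p₀ / (γ - 1) + ρ y t * (∑ k, (u₀ k) ^ 2) / 2
            + (∑ k, (B₀ k) ^ 2) / 2) x)
    -- induction equation
    ∧ (∀ (x : Fin d → ℝ) (t : ℝ), 0 < t → ∀ i,
      deriv (fun _ => B₀ i) t
        + (∑ j, spd (fun _ => u₀ j * B₀ i - B₀ j * u₀ i) j x)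
        = ε * slap (fun _ => B₀ i) x) := by
  refine ⟨fun x t ht i => ?_, fun x t ht => ?_, fun x t ht i => ?_⟩
  · refine regularized_balance_of_affine_in_density (hmass x t ht) (u₀ i) 0
      (fun j => (if i = j then p₀ else 0) - maxwellT B₀ i j) ?_ ?_ ?_ <;> intros <;> ring
  · refine regularized_balance_of_affine_in_density (hmass x t ht) ((∑ k, u₀ k ^ 2) / 2)
      (p₀ / (γ - 1) + (∑ k, B₀ k ^ 2) / 2)
      (fun j => u₀ j * (p₀ / (γ - 1) + (∑ k, B₀ k ^ 2) / 2 + p₀) - ∑ k, u₀ k * maxwellT B₀ k j)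
      ?_ ?_ ?_ <;> intros <;> ring
  · refine regularized_balance_of_affine_in_density (hmass x t ht) 0 (B₀ i)
      (fun j => u₀ j * B₀ i - B₀ j * u₀ i) ?_ ?_ ?_ <;> intros <;> ring

/-- contact waves are compatible with the monolithic parabolic flux.
If `ρ` solves the regularized mass equation `∂ₜρ + ∇·(ρu₀) = εΔρ` with constant
`u₀, B₀, p₀`, then with `m := ρu₀`, `E := p₀/(γ−1) + ρ|u₀|²/2 + |B₀|²/2`, `B := B₀`,
and `𝒯 := B₀ ⊗ B₀ − (|B₀|²/2)I`, the momentum, energy, and induction equations of the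
monolithic-regularized ideal MHD system hold at every point. -/
theorem stmt_16 {d : ℕ} (hd : 1 ≤ d) (γ ε : ℝ) (hγ : 1 < γ) (hε : 0 < ε)
    (u₀ B₀ : Fin d → ℝ) (p₀ : ℝ)
    (ρ : (Fin d → ℝ) → ℝ → ℝ)
    (hρpos : ∀ x t, 0 < ρ x t)
    (hρx : ∀ t, ContDiff ℝ 2 fun x => ρ x t) (hρt : ∀ x, ContDiff ℝ 1 fun t => ρ x t)
    (hmass : ∀ (x : Fin d → ℝ) (t : ℝ), 0 < t →
      deriv (fun τ => ρ x τ) t + (∑ j, spd (fun y => ρ y t * u₀ j) j x)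
        = ε * slap (fun y => ρ y t) x) :
    -- momentum equation
    (∀ (x : Fin d → ℝ) (t : ℝ), 0 < t → ∀ i,
      deriv (fun τ => ρ x τ * u₀ i) t
        + (∑ j, spd (fun y => (ρ y t * u₀ i) * u₀ j
            + (if i = j then p₀ else 0) - maxwellT B₀ i j) j x)
        = ε * slap (fun y => ρ y t * u₀ i) x)
    -- energy equation
    ∧ (∀ (x : Fin d → ℝ) (t : ℝ), 0 < t →
      deriv (fun τ => p₀ / (γ - 1) + ρ x τ * (∑ k, (u₀ k) ^ 2) / 2
          + (∑ k, (B₀ k) ^ 2) / 2) t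
        + (∑ j, spd (fun y => u₀ j * ((p₀ / (γ - 1) + ρ y t * (∑ k, (u₀ k) ^ 2) / 2
              + (∑ k, (B₀ k) ^ 2) / 2) + p₀)
            - ∑ k, u₀ k * maxwellT B₀ k j) j x)
        = ε * slap (fun y => p₀ / (γ - 1) + ρ y t * (∑ k, (u₀ k) ^ 2) / 2
            + (∑ k, (B₀ k) ^ 2) / 2) x)
    -- induction equation
    ∧ (∀ (x : Fin d → ℝ) (t : ℝ), 0 < t → ∀ i,
      deriv (fun _ => B₀ i) t
        + (∑ j, spd (fun _ => u₀ j * B₀ i - B₀ j * u₀ i) j x)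
        = ε * slap (fun _ => B₀ i) x) :=
  stmt_16_general γ ε u₀ B₀ p₀ ρ hmass
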